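/- arXiv:2203.01964 — 5 statements merged into one kernel-verified Lean document; each statement's English description precedes it below -/
import Mathlib

section
/- Let ρ = Σ_i r_i |u_i⟩⟨u_i| and σ = Σ_j s_j |v_j⟩⟨v_j| be states on a separable Hilbert space (with {u_i}, {v_j} orthonormal bases). Then P = Q if and only if ρ = σ, where P(i,j) = r_i |⟨u_i,v_j⟩|² and Q(i,j) = s_j |⟨u_i,v_j⟩|². -/
open scoped InnerProductSpace

private lemma summable_aux {H : Type*} [NormedAddCommGroup H] [InnerProductSpace ℂ H]
    [CompleteSpace H] {I : Type*} (u : HilbertBasis I ℂ H) (c : I → ℝ)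
    (hc : ∀ i, |c i| ≤ 1) (w : H) :
    Summable (fun i => (c i : ℂ) • ⟪(u i : H), w⟫_ℂ • (u i : H)) := by
  have hon := u.orthonormal
  have hfam := hon.orthogonalFamily (𝕜 := ℂ)
  have h1 : Summable (fun i => ‖⟪(u i : H), w⟫_ℂ‖ ^ 2) := by
    have hs := (u.hasSum_repr w).summable
    have h2 := (hfam.summable_iff_norm_sq_summable (fun i => ⟪(u i : H), w⟫_ℂ)).mp ?_
    · simpa using h2
    · simpa [LinearIsometry.toSpanSingleton_apply, u.repr_apply_apply] using hs
  have h2 : Summable (fun i => ‖(c i : ℂ) * ⟪(u i : H), w⟫_ℂ‖ ^ 2) := by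
    refine Summable.of_nonneg_of_le (fun i => by positivity) (fun i => ?_) h1
    rw [norm_mul, mul_pow]
    have hci : ‖(c i : ℂ)‖ ≤ 1 := by simpa using hc i
    have hsq : ‖(c i : ℂ)‖ ^ 2 ≤ 1 := by nlinarith [norm_nonneg ((c i : ℂ))]
    exact mul_le_of_le_one_left (sq_nonneg _) hsq
  have h3 := (hfam.summable_iff_norm_sq_summable
    (fun i => (c i : ℂ) * ⟪(u i : H), w⟫_ℂ)).mpr (by simpa using h2)
  simpa [LinearIsometry.toSpanSingleton_apply, smul_smul] using h3

private lemma inner_aux {H : Type*} [NormedAddCommGroup H] [InnerProductSpace ℂ H]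
    [CompleteSpace H] {I : Type*} (u : HilbertBasis I ℂ H) (c : I → ℝ)
    (hc : ∀ i, |c i| ≤ 1) (w : H) (k : I) :
    ⟪(u k : H), ∑' i, (c i : ℂ) • ⟪(u i : H), w⟫_ℂ • (u i : H)⟫_ℂ
      = (c k : ℂ) * ⟪(u k : H), w⟫_ℂ := by
  classical
  have hon := u.orthonormal
  have hmap := (innerSL ℂ ((u k : H))).map_tsum (summable_aux u c hc w)
  simp only [innerSL_apply_apply] at hmap
  rw [hmap]
  rw [tsum_eq_single k]
  · simp only [inner_smul_right]
    have : ⟪(u k : H), (u k : H)⟫_ℂ = 1 := orthonormal_iff_ite.mp hon k k ▸ by simp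
    rw [this, mul_one]
  · intro i hik
    rw [inner_smul_right, inner_smul_right, hon.2 hik.symm, mul_zero, mul_zero]

/-- For states `ρ = Σ_i r_i |u_i⟩⟨u_i|`, `σ = Σ_j s_j |v_j⟩⟨v_j|` on a
separable complex Hilbert space, with `P(i,j) = r_i |⟨u_i,v_j⟩|²` and
`Q(i,j) = s_j |⟨u_i,v_j⟩|²`, we have `P = Q` if and only if `ρ = σ`. -/
theorem stmt2 {H : Type*} [NormedAddCommGroup H] [InnerProductSpace ℂ H]
    [CompleteSpace H] [TopologicalSpace.SeparableSpace H]
    {I : Type*} [Countable I]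
    (r s : I → ℝ) (hr : ∀ i, 0 ≤ r i) (hs : ∀ j, 0 ≤ s j)
    (hr1 : HasSum r 1) (hs1 : HasSum s 1)
    (u v : HilbertBasis I ℂ H)
    (ρ σ : H →L[ℂ] H)
    (hρ : ∀ w, ρ w = ∑' i, (r i : ℂ) • ⟪(u i : H), w⟫_ℂ • (u i : H))
    (hσ : ∀ w, σ w = ∑' j, (s j : ℂ) • ⟪(v j : H), w⟫_ℂ • (v j : H)) :
    (∀ i j, r i * ‖⟪(u i : H), (v j : H)⟫_ℂ‖ ^ 2
        = s j * ‖⟪(u i : H), (v j : H)⟫_ℂ‖ ^ 2) ↔ ρ = σ := by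
  classical
  have hon_u := u.orthonormal
  have hon_v := v.orthonormal
  have hrb : ∀ i, |r i| ≤ 1 := fun i => by
    rw [abs_of_nonneg (hr i)]
    exact le_hasSum hr1 i (fun j _ => hr j)
  -- σ (v j) = s j • v j
  have hσv : ∀ j, σ (v j) = (s j : ℂ) • (v j : H) := by
    intro j
    rw [hσ, tsum_eq_single j]
    · have : ⟪(v j : H), (v j : H)⟫_ℂ = 1 := orthonormal_iff_ite.mp hon_v j j ▸ by simp
      rw [this, one_smul]
    · intro j' hj'
      rw [hon_v.2 hj', zero_smul, smul_zero]
  constructor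
  · intro h
    have key : ∀ i j, (r i : ℂ) * ⟪(u i : H), (v j : H)⟫_ℂ
        = (s j : ℂ) * ⟪(u i : H), (v j : H)⟫_ℂ := by
      intro i j
      by_cases hz : ⟪(u i : H), (v j : H)⟫_ℂ = 0
      · simp [hz]
      · have hn : ‖⟪(u i : H), (v j : H)⟫_ℂ‖ ^ 2 ≠ 0 :=
          pow_ne_zero _ (norm_ne_zero_iff.mpr hz)
        have : r i = s j := mul_right_cancel₀ hn (h i j)
        rw [this]
    -- ρ (v j) = s j • v j
    have hρv : ∀ j, ρ (v j) = (s j : ℂ) • (v j : H) := by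
      intro j
      rw [hρ]
      have heq : (fun i => (r i : ℂ) • ⟪(u i : H), (v j : H)⟫_ℂ • (u i : H))
          = fun i => (s j : ℂ) • (⟪(u i : H), (v j : H)⟫_ℂ • (u i : H)) := by
        funext i
        rw [smul_smul, smul_smul, key i j]
      rw [heq, tsum_const_smul'' ((s j : ℂ))]
      congr 1
      have hsum := u.hasSum_repr (v j)
      simp only [u.repr_apply_apply] at hsum
      exact hsum.tsum_eq
    -- extend from the basis v to all of H
    have hdense : Dense ((Submodule.span ℂ (Set.range (fun j => (v j : H)))) : Set H) := by
      rw [Submodule.dense_iff_topologicalClosure_eq_top]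
      simp
    refine ContinuousLinearMap.ext_on hdense ?_
    rintro x ⟨j, rfl⟩
    rw [hρv j, hσv j]
  · intro hρσ i j
    have h1 : ⟪(u i : H), ρ (v j)⟫_ℂ = (r i : ℂ) * ⟪(u i : H), (v j : H)⟫_ℂ := by
      rw [hρ]
      exact inner_aux u r hrb (v j) i
    rw [hρσ, hσv j, inner_smul_right] at h1
    -- h1 : s j * ⟪u i, v j⟫ = r i * ⟪u i, v j⟫
    have h2 := congrArg norm h1
    simp only [norm_mul, Complex.norm_real, Real.norm_eq_abs,
      abs_of_nonneg (hr i), abs_of_nonneg (hs j)] at h2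
    -- h2 : s j * ‖⟪u i, v j⟫‖ = r i * ‖⟪u i, v j⟫‖
    nlinarith [norm_nonneg (⟪(u i : H), (v j : H)⟫_ℂ)]
end

section
/- Let ρ = Σ_i r_i |u_i⟩⟨u_i| and σ = Σ_j s_j |v_j⟩⟨v_j| be states with {u_i}, {v_j} orthonormal bases, and let P(i,j) = r_i |⟨u_i,v_j⟩|², Q(i,j) = s_j |⟨u_i,v_j⟩|² be the associated probability measures on I×I. Then supp ρ ⊆ supp σ if and only if P is absolutely continuous with respect to Q. -/
/-!
Both operators are diagonal in their bases: `⟪u i, ρ w⟫ = r i ⟪u i, w⟫`, so `w ∈ ker σ` iff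
`⟪v j, w⟫ = 0` whenever `s j ≠ 0`. Kernels are closed, hence `supp ρ ⊆ supp σ` iff
`ker σ ⊆ ker ρ`. If `s j = 0` then `v j ∈ ker σ`, and `ρ (v j) = 0` gives `r i ⟪u i, v j⟫ = 0`.
Conversely, for `w ∈ ker σ` and `r i ≠ 0`, every term of the Parseval expansion
`⟪u i, w⟫ = ∑ j, ⟪u i, v j⟫ ⟪v j, w⟫` vanishes.
-/

open scoped InnerProductSpace

namespace HilbertBasis

variable {ι 𝕜 E : Type*} [RCLike 𝕜] [NormedAddCommGroup E] [InnerProductSpace 𝕜 E]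

theorem inner_tsum_smul_inner_smul (e : HilbertBasis ι 𝕜 E) {t : ι → 𝕜} {C : ℝ}
    (ht : ∀ i, ‖t i‖ ≤ C) (w : E) (k : ι) :
    ⟪e k, ∑' i, t i • ⟪e i, w⟫_𝕜 • e i⟫_𝕜 = t k * ⟪e k, w⟫_𝕜 := by
  have hmem : Memℓp (fun i ↦ t i * ⟪e i, w⟫_𝕜) 2 :=
    ((lp.memℓp (e.repr w)).norm.const_mul C).mono fun i ↦ by
      rw [norm_mul, e.repr_apply_apply]
      exact mul_le_mul_of_nonneg_right (ht i) (norm_nonneg _)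
  simp_rw [smul_smul]
  rw [(e.hasSum_repr_symm ⟨_, hmem⟩).tsum_eq, ← e.repr_apply_apply,
    LinearIsometryEquiv.apply_symm_apply]

theorem eq_zero_iff_forall_inner_eq_zero (e : HilbertBasis ι 𝕜 E) (x : E) :
    x = 0 ↔ ∀ i, ⟪e i, x⟫_𝕜 = 0 := by
  simp only [← e.repr_apply_apply, ← e.repr.map_eq_zero_iff, lp.ext_iff, funext_iff,
    lp.coeFn_zero, Pi.zero_apply]

theorem apply_eq_zero_iff_of_inner_apply (e : HilbertBasis ι 𝕜 E) {A : E → E} {t : ι → 𝕜}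
    (hA : ∀ w i, ⟪e i, A w⟫_𝕜 = t i * ⟪e i, w⟫_𝕜) (w : E) :
    A w = 0 ↔ ∀ i, t i = 0 ∨ ⟪e i, w⟫_𝕜 = 0 := by
  simp only [e.eq_zero_iff_forall_inner_eq_zero, hA, mul_eq_zero]

end HilbertBasis

section

variable {𝕜 E : Type*} [RCLike 𝕜] [NormedAddCommGroup E] [InnerProductSpace 𝕜 E]

theorem ContinuousLinearMap.orthogonal_ker_le_orthogonal_ker_iff [CompleteSpace E]
    (A B : E →L[𝕜] E) :
    (LinearMap.ker (A : E →ₗ[𝕜] E))ᗮ ≤ (LinearMap.ker (B : E →ₗ[𝕜] E))ᗮ ↔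
      LinearMap.ker (B : E →ₗ[𝕜] E) ≤ LinearMap.ker (A : E →ₗ[𝕜] E) :=
  have := A.isClosed_ker.completeSpace_coe
  have := B.isClosed_ker.completeSpace_coe
  Submodule.orthogonal_le_orthogonal_iff

theorem ker_le_ker_iff_of_inner_apply {ι : Type*} (u v : HilbertBasis ι 𝕜 E) {A B : E → E}
    {r s : ι → 𝕜} (hA : ∀ w i, ⟪u i, A w⟫_𝕜 = r i * ⟪u i, w⟫_𝕜)
    (hB : ∀ w j, ⟪v j, B w⟫_𝕜 = s j * ⟪v j, w⟫_𝕜) :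
    (∀ w, B w = 0 → A w = 0) ↔ ∀ i j, s j = 0 → r i = 0 ∨ ⟪u i, v j⟫_𝕜 = 0 := by
  simp only [u.apply_eq_zero_iff_of_inner_apply hA, v.apply_eq_zero_iff_of_inner_apply hB]
  constructor
  · intro h i j hsj
    refine h (v j) (fun k ↦ ?_) i
    rcases eq_or_ne k j with rfl | hkj
    · exact .inl hsj
    · exact .inr (v.orthonormal.inner_eq_zero hkj)
  · intro h w hw i
    refine or_iff_not_imp_left.2 fun hri ↦ ?_
    have hterm : ∀ j, ⟪u i, v j⟫_𝕜 * ⟪v j, w⟫_𝕜 = 0 := fun j ↦ by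
      rcases hw j with hsj | hvw
      · simp [(h i j hsj).resolve_left hri]
      · simp [hvw]
    rw [← v.tsum_inner_mul_inner]
    simp only [hterm, tsum_zero]

end

theorem stmt4_general {H : Type*} [NormedAddCommGroup H] [InnerProductSpace ℂ H]
    [CompleteSpace H]
    {I : Type*}
    (r s : I → ℝ) (hr : ∀ i, 0 ≤ r i) (hs : ∀ j, 0 ≤ s j)
    (hr1 : HasSum r 1) (hs1 : HasSum s 1)
    (u v : HilbertBasis I ℂ H)
    (ρ σ : H →L[ℂ] H)
    (hρ : ∀ w, ρ w = ∑' i, (r i : ℂ) • ⟪(u i : H), w⟫_ℂ • (u i : H))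
    (hσ : ∀ w, σ w = ∑' j, (s j : ℂ) • ⟪(v j : H), w⟫_ℂ • (v j : H)) :
    (LinearMap.ker (ρ : H →ₗ[ℂ] H))ᗮ ≤ (LinearMap.ker (σ : H →ₗ[ℂ] H))ᗮ ↔
      ∀ i j, s j * ‖⟪(u i : H), (v j : H)⟫_ℂ‖ ^ 2 = 0 →
        r i * ‖⟪(u i : H), (v j : H)⟫_ℂ‖ ^ 2 = 0 := by
  have hr_le (i : I) : ‖(r i : ℂ)‖ ≤ 1 := by
    simpa [abs_of_nonneg (hr i)] using le_hasSum hr1 i fun j _ ↦ hr j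
  have hs_le (j : I) : ‖(s j : ℂ)‖ ≤ 1 := by
    simpa [abs_of_nonneg (hs j)] using le_hasSum hs1 j fun k _ ↦ hs k
  have hρu (w : H) (i : I) : ⟪u i, ρ w⟫_ℂ = r i * ⟪u i, w⟫_ℂ := by
    rw [hρ, u.inner_tsum_smul_inner_smul hr_le]
  have hσv (w : H) (j : I) : ⟪v j, σ w⟫_ℂ = s j * ⟪v j, w⟫_ℂ := by
    rw [hσ, v.inner_tsum_smul_inner_smul hs_le]
  rw [ContinuousLinearMap.orthogonal_ker_le_orthogonal_ker_iff, SetLike.le_def]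
  simp only [LinearMap.mem_ker, ContinuousLinearMap.coe_coe]
  rw [ker_le_ker_iff_of_inner_apply u v hρu hσv]
  simp only [Complex.ofReal_eq_zero, mul_eq_zero, pow_eq_zero_iff two_ne_zero, norm_eq_zero]
  refine forall₂_congr fun i j ↦ ?_
  tauto

/-- For states `ρ, σ` as above with associated probability distributions
`P(i,j) = r_i |⟨u_i,v_j⟩|²` and `Q(i,j) = s_j |⟨u_i,v_j⟩|²` on `I × I`,
`supp ρ ⊆ supp σ` if and only if `P ≪ Q` (i.e. `Q(i,j) = 0` implies `P(i,j) = 0`). -/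
theorem stmt4 {H : Type*} [NormedAddCommGroup H] [InnerProductSpace ℂ H]
    [CompleteSpace H] [TopologicalSpace.SeparableSpace H]
    {I : Type*} [Countable I]
    (r s : I → ℝ) (hr : ∀ i, 0 ≤ r i) (hs : ∀ j, 0 ≤ s j)
    (hr1 : HasSum r 1) (hs1 : HasSum s 1)
    (u v : HilbertBasis I ℂ H)
    (ρ σ : H →L[ℂ] H)
    (hρ : ∀ w, ρ w = ∑' i, (r i : ℂ) • ⟪(u i : H), w⟫_ℂ • (u i : H))
    (hσ : ∀ w, σ w = ∑' j, (s j : ℂ) • ⟪(v j : H), w⟫_ℂ • (v j : H)) :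
    (LinearMap.ker (ρ : H →ₗ[ℂ] H))ᗮ ≤ (LinearMap.ker (σ : H →ₗ[ℂ] H))ᗮ ↔
      ∀ i j, s j * ‖⟪(u i : H), (v j : H)⟫_ℂ‖ ^ 2 = 0 →
        r i * ‖⟪(u i : H), (v j : H)⟫_ℂ‖ ^ 2 = 0 :=
  stmt4_general r s hr hs hr1 hs1 u v ρ σ hρ hσ
end

section
/- With ρ = Σ_i r_i |u_i⟩⟨u_i|, σ = Σ_j s_j |v_j⟩⟨v_j| states as above and P(i,j) = r_i |⟨u_i,v_j⟩|², Q(i,j) = s_j |⟨u_i,v_j⟩|², the Hilbert–Schmidt norm satisfies ‖ρ − σ‖₂² ≤ V(P,Q), where V(P,Q) = Σ_{i,j} |P(i,j) − Q(i,j)| is the total variation distance. -/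
open scoped InnerProductSpace

/-!
Since `ρ uᵢ = rᵢ uᵢ` and `σ vⱼ = sⱼ vⱼ`, the operator `ρ - σ` is symmetric and
`⟪vⱼ, (ρ - σ) uᵢ⟫ = (rᵢ - sⱼ) ⟪vⱼ, uᵢ⟫`. For a symmetric operator the Hilbert–Schmidt sum
`∑ₖ ‖A eₖ‖²` does not depend on the Hilbert basis, so by Parseval it equals
`∑ᵢⱼ (rᵢ - sⱼ)² |⟪uᵢ, vⱼ⟫|²`, and termwise `(rᵢ - sⱼ)² ≤ |rᵢ - sⱼ|` because `rᵢ, sⱼ ∈ [0, 1]`.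
All double series converge: they are dominated by `|P - Q|`, and `P`, `Q` are probability
distributions on `I × I`.
-/

theorem HasSum.of_fiberwise_of_nonneg {β γ : Type*} {f : β × γ → ℝ} {g : β → ℝ} {a : ℝ}
    (hf : 0 ≤ f) (hfg : ∀ b, HasSum (fun c => f (b, c)) (g b)) (hg : HasSum g a) :
    HasSum f a := by
  have hsum : Summable f := (summable_prod_of_nonneg hf).2
    ⟨fun b => (hfg b).summable, hg.summable.congr fun b => (hfg b).tsum_eq.symm⟩
  rw [hg.unique (hsum.hasSum.prod_fiberwise hfg)]
  exact hsum.hasSum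

theorem sq_sub_le_abs_sub {x y : ℝ} (hx₀ : 0 ≤ x) (hx₁ : x ≤ 1) (hy₀ : 0 ≤ y) (hy₁ : y ≤ 1) :
    (x - y) ^ 2 ≤ |x - y| := by
  rw [← sq_abs]
  have : |x - y| ≤ 1 := abs_sub_le_iff.2 ⟨by linarith, by linarith⟩
  nlinarith [abs_nonneg (x - y)]

namespace HilbertBasis

variable {ι κ 𝕜 E : Type*} [RCLike 𝕜] [NormedAddCommGroup E] [InnerProductSpace 𝕜 E]

theorem hasSum_norm_inner_sq (b : HilbertBasis ι 𝕜 E) (x : E) :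
    HasSum (fun i => ‖⟪b i, x⟫_𝕜‖ ^ 2) (‖x‖ ^ 2) := by
  have h := (b.hasSum_inner_mul_inner x x).mapL (RCLike.reCLM (K := 𝕜))
  rw [RCLike.reCLM_apply, inner_self_eq_norm_sq] at h
  refine h.congr_fun fun i => ?_
  rw [← inner_conj_symm, RCLike.mul_conj, RCLike.norm_conj, ← RCLike.ofReal_pow, RCLike.ofReal_re]

theorem tsum_smul_inner_smul_self (b : HilbertBasis ι 𝕜 E) (t : ι → 𝕜) (i : ι) :
    ∑' k, t k • ⟪b k, b i⟫_𝕜 • b k = t i • b i := by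
  rw [tsum_eq_single i fun k hk => by rw [b.orthonormal.2 hk, zero_smul, smul_zero],
    inner_self_eq_one_of_norm_eq_one (b.orthonormal.1 i), one_smul]

theorem inner_apply_of_apply_eq_smul (b : HilbertBasis ι 𝕜 E) {T : E →L[𝕜] E} {t : ι → 𝕜}
    (hT : ∀ i, T (b i) = t i • b i) (i : ι) (x : E) : ⟪b i, T x⟫_𝕜 = t i * ⟪b i, x⟫_𝕜 := by
  have h := ((b.hasSum_repr x).mapL T).mapL (innerSL 𝕜 (b i))
  simp only [map_smul, hT, innerSL_apply_apply, b.repr_apply_apply] at h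
  refine h.unique ?_
  convert hasSum_single i fun k hk => ?_ using 1
  · rw [inner_self_eq_one_of_norm_eq_one (b.orthonormal.1 i)]; ring
  · rw [b.orthonormal.2 hk.symm]; ring

theorem isSymmetric_of_apply_eq_smul (b : HilbertBasis ι 𝕜 E) {T : E →L[𝕜] E} {t : ι → ℝ}
    (hT : ∀ i, T (b i) = (t i : 𝕜) • b i) : (T : E →ₗ[𝕜] E).IsSymmetric := by
  intro x y
  simp only [ContinuousLinearMap.coe_coe]
  rw [← b.tsum_inner_mul_inner, ← b.tsum_inner_mul_inner x]
  refine tsum_congr fun k => ?_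
  rw [← inner_conj_symm (T x), b.inner_apply_of_apply_eq_smul hT, b.inner_apply_of_apply_eq_smul hT,
    map_mul, RCLike.conj_ofReal, inner_conj_symm]
  ring

theorem hasSum_norm_apply_sq_of_isSymmetric (u : HilbertBasis ι 𝕜 E) (e : HilbertBasis κ 𝕜 E)
    {A : E →L[𝕜] E} (hA : (A : E →ₗ[𝕜] E).IsSymmetric) {a : ℝ}
    (ha : HasSum (fun i => ‖A (u i)‖ ^ 2) a) : HasSum (fun k => ‖A (e k)‖ ^ 2) a := by
  have hfiber : ∀ i, HasSum (fun k => ‖⟪u i, A (e k)⟫_𝕜‖ ^ 2) (‖A (u i)‖ ^ 2) := fun i =>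
    (e.hasSum_norm_inner_sq (A (u i))).congr_fun fun k => by
      rw [← ContinuousLinearMap.coe_coe, ← hA, norm_inner_symm, ContinuousLinearMap.coe_coe]
  have hprod : HasSum (fun p : ι × κ => ‖⟪u p.1, A (e p.2)⟫_𝕜‖ ^ 2) a :=
    .of_fiberwise_of_nonneg (fun _ => by positivity) hfiber ha
  exact ((Equiv.prodComm κ ι).hasSum_iff.2 hprod).prod_fiberwise fun k =>
    u.hasSum_norm_inner_sq (A (e k))

theorem hasSum_mul_norm_inner_sq (u : HilbertBasis ι 𝕜 E) (v : HilbertBasis κ 𝕜 E)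
    {r : ι → ℝ} {a : ℝ} (hr : ∀ i, 0 ≤ r i) (ha : HasSum r a) :
    HasSum (fun p : ι × κ => r p.1 * ‖⟪u p.1, v p.2⟫_𝕜‖ ^ 2) a :=
  .of_fiberwise_of_nonneg (fun p => mul_nonneg (hr _) (sq_nonneg _)) (fun i => by
    simpa [norm_inner_symm, u.orthonormal.1 i] using
      (v.hasSum_norm_inner_sq (u i)).mul_left (r i)) ha

end HilbertBasis

theorem stmt6_general {H : Type*} [NormedAddCommGroup H] [InnerProductSpace ℂ H]
    {I : Type*}
    (r s : I → ℝ) (hr : ∀ i, 0 ≤ r i) (hs : ∀ j, 0 ≤ s j)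
    (hr1 : HasSum r 1) (hs1 : HasSum s 1)
    (u v : HilbertBasis I ℂ H)
    (ρ σ : H →L[ℂ] H)
    (hρ : ∀ w, ρ w = ∑' i, (r i : ℂ) • ⟪(u i : H), w⟫_ℂ • (u i : H))
    (hσ : ∀ w, σ w = ∑' j, (s j : ℂ) • ⟪(v j : H), w⟫_ℂ • (v j : H))
    {J : Type*} (e : HilbertBasis J ℂ H) :
    ∑' k, ‖(ρ - σ) (e k)‖ ^ 2
      ≤ ∑' p : I × I,
          |r p.1 * ‖⟪(u p.1 : H), (v p.2 : H)⟫_ℂ‖ ^ 2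
            - s p.2 * ‖⟪(u p.1 : H), (v p.2 : H)⟫_ℂ‖ ^ 2| := by
  have hr_le (i : I) : r i ≤ 1 := le_hasSum hr1 i fun j _ => hr j
  have hs_le (j : I) : s j ≤ 1 := le_hasSum hs1 j fun i _ => hs i
  have hρu (i : I) : ρ (u i) = (r i : ℂ) • u i := (hρ _).trans (u.tsum_smul_inner_smul_self _ i)
  have hσv (j : I) : σ (v j) = (s j : ℂ) • v j := (hσ _).trans (v.tsum_smul_inner_smul_self _ j)
  set c : I × I → ℝ := fun p => ‖⟪(u p.1 : H), (v p.2 : H)⟫_ℂ‖ ^ 2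
  have hP : HasSum (fun p => r p.1 * c p) 1 := u.hasSum_mul_norm_inner_sq v hr hr1
  have hQ : HasSum (fun p => s p.2 * c p) 1 := (Equiv.prodComm I I).hasSum_iff.1 <| by
    simpa [Function.comp_def, c, norm_inner_symm] using v.hasSum_mul_norm_inner_sq u hs hs1
  have hTV : Summable fun p => |r p.1 * c p - s p.2 * c p| := (hP.summable.sub hQ.summable).abs
  have hinner (i j : I) :
      ⟪(v j : H), (ρ - σ) (u i)⟫_ℂ = ((r i - s j : ℝ) : ℂ) * ⟪(v j : H), (u i : H)⟫_ℂ := by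
    rw [sub_apply, inner_sub_right, hρu, inner_smul_right, v.inner_apply_of_apply_eq_smul hσv]
    push_cast
    ring
  have hentry (i : I) : HasSum (fun j => (r i - s j) ^ 2 * c (i, j)) (‖(ρ - σ) (u i)‖ ^ 2) :=
    (v.hasSum_norm_inner_sq ((ρ - σ) (u i))).congr_fun fun j => by
      rw [hinner, norm_mul, mul_pow, Complex.norm_real, Real.norm_eq_abs, sq_abs, norm_inner_symm]
  have hbound (p : I × I) : (r p.1 - s p.2) ^ 2 * c p ≤ |r p.1 * c p - s p.2 * c p| := by
    rw [← sub_mul, abs_mul, abs_pow, abs_norm]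
    exact mul_le_mul_of_nonneg_right (sq_sub_le_abs_sub (hr _) (hr_le _) (hs _) (hs_le _))
      (sq_nonneg _)
  have hsymm : ((ρ - σ : H →L[ℂ] H) : H →ₗ[ℂ] H).IsSymmetric :=
    (u.isSymmetric_of_apply_eq_smul hρu).sub (v.isSymmetric_of_apply_eq_smul hσv)
  have hsq := hTV.of_nonneg_of_le (fun _ => by positivity) hbound
  rw [(u.hasSum_norm_apply_sq_of_isSymmetric e hsymm (hsq.hasSum.prod_fiberwise hentry)).tsum_eq]
  exact hsq.tsum_le_tsum hbound hTV

/-- With `ρ, σ` states as above and `P(i,j) = r_i |⟨u_i,v_j⟩|²`,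
`Q(i,j) = s_j |⟨u_i,v_j⟩|²`, the squared Hilbert–Schmidt norm of `ρ − σ` (computed in
any orthonormal basis) is bounded by the total variation distance
`V(P,Q) = Σ_{i,j} |P(i,j) − Q(i,j)|`. -/
theorem stmt6 {H : Type*} [NormedAddCommGroup H] [InnerProductSpace ℂ H]
    [CompleteSpace H] [TopologicalSpace.SeparableSpace H]
    {I : Type*} [Countable I]
    (r s : I → ℝ) (hr : ∀ i, 0 ≤ r i) (hs : ∀ j, 0 ≤ s j)
    (hr1 : HasSum r 1) (hs1 : HasSum s 1)
    (u v : HilbertBasis I ℂ H)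
    (ρ σ : H →L[ℂ] H)
    (hρ : ∀ w, ρ w = ∑' i, (r i : ℂ) • ⟪(u i : H), w⟫_ℂ • (u i : H))
    (hσ : ∀ w, σ w = ∑' j, (s j : ℂ) • ⟪(v j : H), w⟫_ℂ • (v j : H))
    {J : Type*} (e : HilbertBasis J ℂ H) :
    ∑' k, ‖(ρ - σ) (e k)‖ ^ 2
      ≤ ∑' p : I × I,
          |r p.1 * ‖⟪(u p.1 : H), (v p.2 : H)⟫_ℂ‖ ^ 2
            - s p.2 * ‖⟪(u p.1 : H), (v p.2 : H)⟫_ℂ‖ ^ 2| :=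
  stmt6_general r s hr hs hr1 hs1 u v ρ σ hρ hσ e
end

section
/- For probability measures P, Q on a countable set, lim_{α↓0} D_α(P‖Q) = −log Q({x : P(x) > 0}), where D_α(P‖Q) = (1/(α−1)) log Σ_x P(x)^α Q(x)^{1−α}. -/
open scoped ENNReal Topology
open Classical

/-- The Rényi divergence of order `α ≠ 1` of two probability mass functions `p, q` on a
countable set, with values in the extended reals:
`(α−1)⁻¹ log Σ_x p(x)^α q(x)^{1−α}`, where the sum is computed in `ℝ≥0∞`; for `α = 1`
it is the Kullback–Leibler divergence. -/
noncomputable def renyiD {X : Type*} (α : ℝ) (p q : X → ℝ) : EReal :=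
  if α = 1 then
    (if ∀ x, q x = 0 → p x = 0 then
      ((∑' x, ENNReal.ofReal (p x * Real.log (p x / q x) + q x - p x) : ℝ≥0∞) : EReal)
    else ⊤)
  else ((α - 1)⁻¹ : ℝ) *
    ENNReal.log (∑' x, ENNReal.ofReal (p x) ^ α * ENNReal.ofReal (q x) ^ (1 - α))

/-
For `0 < α < 1` each term satisfies `p^α q^(1-α) ≤ p + q`, a summable bound, and it tends to `q`
where `p > 0` and to `0` elsewhere as `α ↓ 0`; dominated convergence for the counting measure
therefore sends `∑ p^α q^(1-α)` to `Q({p > 0})`. The logarithm is continuous on `[0, ∞]`, and the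
prefactor `(α - 1)⁻¹` tends to the finite nonzero value `-1`, at which multiplication on `EReal`
is continuous.
-/

open Filter
open scoped NNReal

lemma NNReal.tendsto_rpow_mul_rpow_one_sub_nhdsGT_zero (a b : ℝ≥0) :
    Tendsto (fun α : ℝ => a ^ α * b ^ (1 - α)) (𝓝[>] (0 : ℝ)) (𝓝 (if 0 < a then b else 0)) := by
  split_ifs with ha
  · have hb : Tendsto (fun α : ℝ => b ^ (1 - α)) (𝓝 0) (𝓝 b) := by
      simpa using tendsto_const_nhds.nnrpow (tendsto_const_nhds.sub tendsto_id)
        (Or.inr (by norm_num : (0 : ℝ) < 1 - 0))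
    have ha' : Tendsto (fun α : ℝ => a ^ α) (𝓝 0) (𝓝 1) := by
      simpa using tendsto_const_nhds.nnrpow (tendsto_id (x := 𝓝 (0 : ℝ))) (Or.inl ha.ne')
    simpa using (ha'.mul hb).mono_left nhdsWithin_le_nhds
  · obtain rfl : a = 0 := nonpos_iff_eq_zero.mp (not_lt.mp ha)
    refine tendsto_const_nhds.congr' ?_
    filter_upwards [self_mem_nhdsWithin] with α hα
    rw [NNReal.zero_rpow (ne_of_gt hα), zero_mul]

lemma ENNReal.tendsto_rpow_mul_rpow_one_sub_nhdsGT_zero {a b : ℝ≥0∞} (ha : a ≠ ∞) (hb : b ≠ ∞) :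
    Tendsto (fun α : ℝ => a ^ α * b ^ (1 - α)) (𝓝[>] (0 : ℝ)) (𝓝 (if 0 < a then b else 0)) := by
  lift a to ℝ≥0 using ha
  lift b to ℝ≥0 using hb
  have hcoe : ∀ᶠ α : ℝ in 𝓝[>] 0,
      ((a ^ α * b ^ (1 - α) : ℝ≥0) : ℝ≥0∞) = a ^ α * b ^ (1 - α) := by
    filter_upwards [Ioo_mem_nhdsGT one_pos] with α hα
    rw [ENNReal.coe_mul, ENNReal.coe_rpow_of_nonneg _ hα.1.le,
      ENNReal.coe_rpow_of_nonneg _ (sub_nonneg.mpr hα.2.le)]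
  have hlim : (if 0 < (a : ℝ≥0∞) then (b : ℝ≥0∞) else 0) =
      ((if 0 < a then b else 0 : ℝ≥0) : ℝ≥0∞) := by
    split_ifs <;> simp_all
  rw [hlim]
  exact ((ENNReal.continuous_coe.tendsto _).comp
    (NNReal.tendsto_rpow_mul_rpow_one_sub_nhdsGT_zero a b)).congr' hcoe

lemma ENNReal.rpow_mul_rpow_one_sub_le_add (a b : ℝ≥0∞) {α : ℝ} (h₀ : 0 ≤ α) (h₁ : α ≤ 1) :
    a ^ α * b ^ (1 - α) ≤ a + b :=
  calc a ^ α * b ^ (1 - α) ≤ (a + b) ^ α * (a + b) ^ (1 - α) := by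
        gcongr
        exacts [le_self_add, le_add_self]
    _ = a + b := by
        rw [← ENNReal.rpow_add_of_nonneg _ _ h₀ (sub_nonneg.mpr h₁), add_sub_cancel, ENNReal.rpow_one]

lemma ENNReal.tendsto_tsum_rpow_mul_rpow_one_sub_nhdsGT_zero {X : Type*} {f g : X → ℝ≥0∞}
    (hf : ∑' x, f x ≠ ∞) (hg : ∑' x, g x ≠ ∞) :
    Tendsto (fun α : ℝ => ∑' x, f x ^ α * g x ^ (1 - α)) (𝓝[>] (0 : ℝ))
      (𝓝 (∑' x, if 0 < f x then g x else 0)) := by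
  -- the sums are lintegrals for the counting measure on the discrete σ-algebra
  let _ : MeasurableSpace X := ⊤
  have : MeasurableSingletonClass X := ⟨fun _ => trivial⟩
  simp only [← MeasureTheory.lintegral_count]
  refine MeasureTheory.tendsto_lintegral_filter_of_dominated_convergence (fun x => f x + g x)
    (.of_forall fun _ _ _ => trivial) ?_ ?_ ?_
  · filter_upwards [Ioo_mem_nhdsGT one_pos] with α hα
    exact .of_forall fun x => ENNReal.rpow_mul_rpow_one_sub_le_add _ _ hα.1.le hα.2.le
  · rw [MeasureTheory.lintegral_count, ENNReal.tsum_add]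
    exact ENNReal.add_ne_top.mpr ⟨hf, hg⟩
  · exact .of_forall fun x => ENNReal.tendsto_rpow_mul_rpow_one_sub_nhdsGT_zero
      (ENNReal.ne_top_of_tsum_ne_top hf x) (ENNReal.ne_top_of_tsum_ne_top hg x)

theorem stmt12_general {X : Type*}
    (p q : X → ℝ)
    (hp1 : HasSum p 1) (hq1 : HasSum q 1) :
    Filter.Tendsto (fun α => renyiD α p q) (𝓝[>] (0 : ℝ))
      (𝓝 (-(ENNReal.log (∑' x, if 0 < p x then ENNReal.ofReal (q x) else 0)))) := by
  have hsum := ENNReal.tendsto_tsum_rpow_mul_rpow_one_sub_nhdsGT_zero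
    hp1.summable.tsum_ofReal_ne_top hq1.summable.tsum_ofReal_ne_top
  simp only [ENNReal.ofReal_pos] at hsum
  have hcoef : Tendsto (fun α : ℝ => (((α - 1)⁻¹ : ℝ) : EReal)) (𝓝[>] (0 : ℝ)) (𝓝 (-1)) := by
    have : Tendsto (fun α : ℝ => (α - 1)⁻¹) (𝓝 0) (𝓝 (-1)) := by
      simpa using (tendsto_id.sub tendsto_const_nhds).inv₀ (by norm_num : (0 : ℝ) - 1 ≠ 0)
    exact (continuous_coe_real_ereal.tendsto _).comp (this.mono_left nhdsWithin_le_nhds)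
  have hlim := EReal.Tendsto.mul hcoef ((ENNReal.continuous_log.tendsto _).comp hsum)
    (.inl (by norm_num)) (.inl (by norm_num)) (.inl (EReal.coe_ne_bot (-1)))
    (.inl (EReal.coe_ne_top (-1)))
  rw [neg_one_mul] at hlim
  refine hlim.congr' ?_
  filter_upwards [Ioo_mem_nhdsGT one_pos] with α hα
  simp only [renyiD, if_neg hα.2.ne, Function.comp_apply]

/-- For probability mass functions `p, q` on a countable set,
`lim_{α↓0} D_α(P‖Q) = −log Q({x : p x > 0})`. -/
theorem stmt12 {X : Type*} [Countable X]
    (p q : X → ℝ) (hp : ∀ x, 0 ≤ p x) (hq : ∀ x, 0 ≤ q x)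
    (hp1 : HasSum p 1) (hq1 : HasSum q 1) :
    Filter.Tendsto (fun α => renyiD α p q) (𝓝[>] (0 : ℝ))
      (𝓝 (-(ENNReal.log (∑' x, if 0 < p x then ENNReal.ofReal (q x) else 0)))) :=
  stmt12_general p q hp1 hq1
end

section
/- Let r_i = 2^{−i} and s_j = s^{−1} 2^{−j²} with s = Σ_k 2^{−k²}. Then the Kullback–Leibler divergence Σ_i r_i log(r_i/s_i) = Σ_i 2^{−i}(log s + (i² − i) log 2) is finite, while for every α > 1 the sum Σ_i r_i^α s_i^{1−α} = s^{α−1} Σ_i 2^{(α−1)i² − α i} diverges. Hence D₁ < ∞ but D_α = ∞ for all α > 1 for these probability distributions. -/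
/-!
The KL terms are `2^{-i} (log s + (i² - i) log 2)`, i.e. a polynomial in `i` times a geometric
sequence, hence summable. For `α > 1` the Rényi terms equal `s^{α-1} 2^{(α-1) i² - α i}`; the
quadratic exponent tends to `+∞`, so the terms do not even tend to `0`.
-/

open Real Filter

lemma two_rpow_neg_natCast_add_one (n : ℕ) : (2 : ℝ) ^ (-((n : ℝ) + 1)) = 2⁻¹ ^ (n + 1) := by
  rw [rpow_neg zero_le_two, ← Nat.cast_succ, rpow_natCast, inv_pow]

lemma summable_natCast_add_one_pow_mul_two_rpow_neg (k : ℕ) :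
    Summable fun n : ℕ => ((n : ℝ) + 1) ^ k * (2 : ℝ) ^ (-((n : ℝ) + 1)) := by
  have h : Summable fun n : ℕ => ((n + 1 : ℕ) : ℝ) ^ k * 2⁻¹ ^ (n + 1) :=
    (summable_nat_add_iff (f := fun n : ℕ => (n : ℝ) ^ k * 2⁻¹ ^ n) 1).mpr
      (summable_pow_mul_geometric_of_norm_lt_one k (by norm_num : ‖(2⁻¹ : ℝ)‖ < 1))
  exact h.congr fun n => by rw [two_rpow_neg_natCast_add_one, Nat.cast_succ]

lemma summable_two_rpow_neg_sq :
    Summable fun k : ℕ => (2 : ℝ) ^ (-(((k : ℝ) + 1) ^ 2)) := by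
  refine (summable_natCast_add_one_pow_mul_two_rpow_neg 0).of_nonneg_of_le
    (fun k => (rpow_pos_of_pos two_pos _).le) fun k => ?_
  rw [pow_zero, one_mul]
  apply rpow_le_rpow_of_exponent_le one_le_two
  nlinarith [(Nat.cast_nonneg k : (0 : ℝ) ≤ k)]

lemma tsum_two_rpow_neg_sq_pos : 0 < ∑' k : ℕ, (2 : ℝ) ^ (-(((k : ℝ) + 1) ^ 2)) :=
  summable_two_rpow_neg_sq.tsum_pos (fun _ => (rpow_pos_of_pos two_pos _).le) 0
    (rpow_pos_of_pos two_pos _)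

lemma rpow_neg_mul_log_div_mul_rpow_neg {x s : ℝ} (hx : 0 < x) (hs : 0 < s) (a b : ℝ) :
    x ^ (-a) * log (x ^ (-a) / (s⁻¹ * x ^ (-b))) = x ^ (-a) * (log s + (b - a) * log x) := by
  have hdiv : x ^ (-a) / (s⁻¹ * x ^ (-b)) = s * x ^ (b - a) := by
    rw [rpow_sub hx, rpow_neg hx.le, rpow_neg hx.le]
    field_simp
  rw [hdiv, log_mul hs.ne' (rpow_pos_of_pos hx _).ne', log_rpow hx]

lemma rpow_neg_rpow_mul_inv_mul_rpow_neg_rpow {x s : ℝ} (hx : 0 < x) (hs : 0 < s) (a b α : ℝ) :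
    (x ^ (-a)) ^ α * (s⁻¹ * x ^ (-b)) ^ (1 - α) = s⁻¹ ^ (1 - α) * x ^ ((α - 1) * b - α * a) := by
  rw [mul_rpow (inv_nonneg.2 hs.le) (rpow_pos_of_pos hx _).le, ← rpow_mul hx.le,
    ← rpow_mul hx.le, mul_left_comm, ← rpow_add hx]
  ring_nf

lemma tendsto_quadratic_natCast_add_one {α : ℝ} (hα : 1 < α) :
    Tendsto (fun n : ℕ => (α - 1) * ((n : ℝ) + 1) ^ 2 - α * ((n : ℝ) + 1)) atTop atTop := by
  have hlin : Tendsto (fun n : ℕ => (n : ℝ) + 1) atTop atTop :=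
    tendsto_atTop_add_const_right atTop 1 tendsto_natCast_atTop_atTop
  have hslope : Tendsto (fun n : ℕ => (α - 1) * ((n : ℝ) + 1) - α) atTop atTop :=
    tendsto_atTop_add_const_right atTop (-α) (hlin.const_mul_atTop (sub_pos.2 hα))
  exact (hslope.atTop_mul_atTop₀ hlin).congr fun n => by ring

/-- Let `r_i = 2^{−i}` and `s_i = s⁻¹ 2^{−i²}` with `s = Σ_k 2^{−k²}`
(probability distributions on the positive integers; here `i = n+1` for `n : ℕ`).
Then the Kullback–Leibler divergence `Σ_i r_i log(r_i/s_i) = Σ_i 2^{−i}(log s + (i²−i) log 2)`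
is finite (the series is summable, with the stated value), while for every `α > 1`
the series `Σ_i r_i^α s_i^{1−α}` diverges. Hence `D₁ < ∞` but `D_α = ∞` for all `α > 1`. -/
theorem stmt19
    (s : ℝ) (hs : s = ∑' k : ℕ, (2 : ℝ) ^ (-(((k : ℝ) + 1) ^ 2)))
    (r q : ℕ → ℝ)
    (hr : ∀ n, r n = (2 : ℝ) ^ (-((n : ℝ) + 1)))
    (hq : ∀ n, q n = s⁻¹ * (2 : ℝ) ^ (-(((n : ℝ) + 1) ^ 2))) :
    Summable (fun n => r n * Real.log (r n / q n)) ∧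
    (∑' n, r n * Real.log (r n / q n)
      = ∑' n : ℕ, (2 : ℝ) ^ (-((n : ℝ) + 1)) *
          (Real.log s + (((n : ℝ) + 1) ^ 2 - ((n : ℝ) + 1)) * Real.log 2)) ∧
    ∀ α : ℝ, 1 < α → ¬ Summable (fun n => r n ^ α * q n ^ (1 - α)) := by
  have hs_pos : 0 < s := hs ▸ tsum_two_rpow_neg_sq_pos
  have hkl : ∀ n, r n * log (r n / q n) = (2 : ℝ) ^ (-((n : ℝ) + 1)) *
      (log s + (((n : ℝ) + 1) ^ 2 - ((n : ℝ) + 1)) * log 2) := fun n => by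
    rw [hr, hq, rpow_neg_mul_log_div_mul_rpow_neg two_pos hs_pos]
  have hkl_summable : Summable fun n : ℕ => (2 : ℝ) ^ (-((n : ℝ) + 1)) *
      (log s + (((n : ℝ) + 1) ^ 2 - ((n : ℝ) + 1)) * log 2) :=
    ((((summable_natCast_add_one_pow_mul_two_rpow_neg 0).mul_left (log s)).add
      (((summable_natCast_add_one_pow_mul_two_rpow_neg 2).sub
        (summable_natCast_add_one_pow_mul_two_rpow_neg 1)).mul_left (log 2)))).congr
      fun n => by ring
  refine ⟨hkl_summable.congr fun n => (hkl n).symm, tsum_congr hkl, fun α hα hsum => ?_⟩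
  have hterms : Tendsto (fun n => r n ^ α * q n ^ (1 - α)) atTop atTop := by
    refine (((tendsto_rpow_atTop_of_base_gt_one 2 one_lt_two).comp
      (tendsto_quadratic_natCast_add_one hα)).const_mul_atTop
        (rpow_pos_of_pos (inv_pos.2 hs_pos) (1 - α))).congr fun n => ?_
    rw [hr, hq, rpow_neg_rpow_mul_inv_mul_rpow_neg_rpow two_pos hs_pos]
    rfl
  exact not_tendsto_nhds_of_tendsto_atTop hterms 0 hsum.tendsto_atTop_zero
end
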